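/- Define f_α = (-1)^{ℓ(α)} ∑_{β ⪰ α} (-1)^{ℓ(β)} y_β in the free (or commutative) algebra on generators y₁, y₂, …, where the sum is over coarsenings β of the composition α and y_β = y_{β₁}⋯y_{β_m}. Then for any compositions α, β: f_α f_β = f_{α·β} + f_{α⊙β}. -/
import Mathlib


/-- A composition: a nonempty list of positive integers. -/
def IsComposition (α : List ℕ) : Prop := α ≠ [] ∧ ∀ a ∈ α, 0 < a

/-- `α ⊙ β`: add the last part of `α` to the first part of `β`. -/
def compNcat (α β : List ℕ) : List ℕ :=
  match α.reverse with
  | [] => β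
  | a :: as =>
    match β with
    | [] => α
    | b :: bs => as.reverse ++ (a + b) :: bs

/-- The list of all coarsenings of a composition (obtained by adding adjacent parts). -/
def coarsenings : List ℕ → List (List ℕ)
  | [] => [[]]
  | [a] => [[a]]
  | a :: b :: t => ((coarsenings (b :: t)).map (a :: ·)) ++ coarsenings ((a + b) :: t)
  termination_by α => α.length

/-- `y_β = y_{β₁} ⋯ y_{β_m}` in the free algebra on generators `y₁, y₂, …`. -/
noncomputable def yProd (β : List ℕ) : FreeAlgebra ℚ ℕ :=
  (β.map (FreeAlgebra.ι ℚ)).prod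

/-- `f_α = (-1)^{ℓ(α)} ∑_{β ⪰ α} (-1)^{ℓ(β)} y_β`. -/
noncomputable def flagF (α : List ℕ) : FreeAlgebra ℚ ℕ :=
  (-1) ^ α.length * ((coarsenings α).map (fun β => (-1 : FreeAlgebra ℚ ℕ) ^ β.length * yProd β)).sum

lemma flagF_singleton (a : ℕ) : flagF [a] = FreeAlgebra.ι ℚ a := by
  simp [flagF, coarsenings, yProd]

lemma neg_one_pow_comm (n : ℕ) (x : FreeAlgebra ℚ ℕ) :
    (-1 : FreeAlgebra ℚ ℕ) ^ n * x = x * (-1) ^ n :=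
  ((Commute.neg_one_left x).pow_left n).eq

lemma sign_calc (n : ℕ) (x S1 S2 : FreeAlgebra ℚ ℕ) :
    (-1 : FreeAlgebra ℚ ℕ) ^ (2 + n) * ((-x) * S1 + S2)
      = x * ((-1) ^ (1 + n) * S1) - (-1) ^ (1 + n) * S2 := by
  rw [pow_add, pow_add]
  norm_num
  rw [mul_add, mul_neg, ← mul_assoc, neg_one_pow_comm n x, mul_assoc]

lemma flagF_cons (a d : ℕ) (t : List ℕ) :
    flagF (a :: d :: t) = FreeAlgebra.ι ℚ a * flagF (d :: t) - flagF ((a + d) :: t) := by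
  have hcoar : coarsenings (a :: d :: t)
      = ((coarsenings (d :: t)).map (a :: ·)) ++ coarsenings ((a + d) :: t) := by
    rw [coarsenings]
  unfold flagF
  rw [hcoar, List.map_append, List.sum_append, List.map_map]
  have hmap : ((coarsenings (d :: t)).map ((fun β => (-1 : FreeAlgebra ℚ ℕ) ^ β.length * yProd β) ∘ (a :: ·)))
      = (coarsenings (d :: t)).map (fun β => (-(FreeAlgebra.ι ℚ a)) * ((-1 : FreeAlgebra ℚ ℕ) ^ β.length * yProd β)) := by
    apply List.map_congr_left
    intro β _
    simp only [Function.comp_apply, yProd, List.map_cons, List.prod_cons, List.length_cons,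
      pow_succ, neg_mul, one_mul, mul_neg]
    rw [mul_one, ← mul_assoc, neg_one_pow_comm β.length (FreeAlgebra.ι ℚ a), mul_assoc]
  rw [hmap, List.sum_map_mul_left]
  simp only [List.length_cons]
  have h2 : t.length + 1 + 1 = 2 + t.length := by ring
  have h1 : t.length + 1 = 1 + t.length := by ring
  rw [h2, h1, sign_calc]

lemma compNcat_single (a b : ℕ) (bs : List ℕ) : compNcat [a] (b :: bs) = (a + b) :: bs := rfl

lemma compNcat_cons (a : ℕ) (l : List ℕ) (hl : l ≠ []) (b : ℕ) (bs : List ℕ) :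
    compNcat (a :: l) (b :: bs) = a :: compNcat l (b :: bs) := by
  obtain ⟨x, xs, h⟩ := List.exists_cons_of_ne_nil (l := l.reverse) (by simpa using hl)
  have hl' : l = xs.reverse ++ [x] := by
    have := congrArg List.reverse h
    simpa using this
  subst hl'
  simp [compNcat, List.reverse_append]

lemma key (b : ℕ) (bs : List ℕ) : ∀ n (α : List ℕ), α.length ≤ n → α ≠ [] →
    flagF α * flagF (b :: bs)
      = flagF (α ++ b :: bs) + flagF (compNcat α (b :: bs)) := by
  intro n
  induction n with
  | zero =>
    intro α hlen hne
    exact absurd (List.length_eq_zero_iff.mp (Nat.le_zero.mp hlen)) hne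
  | succ n IH =>
    intro α hlen hne
    match α with
    | [a] =>
      rw [flagF_singleton, compNcat_single, List.cons_append, List.nil_append,
        flagF_cons a b bs]
      ring_nf
      abel
    | a :: d :: t =>
      have h1 : flagF (d :: t) * flagF (b :: bs)
          = flagF ((d :: t) ++ b :: bs) + flagF (compNcat (d :: t) (b :: bs)) := by
        exact IH _ (by simpa using Nat.le_of_succ_le_succ hlen) (by simp)
      have h2 : flagF ((a + d) :: t) * flagF (b :: bs)
          = flagF (((a + d) :: t) ++ b :: bs) + flagF (compNcat ((a + d) :: t) (b :: bs)) := by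
        exact IH _ (by simpa using Nat.le_of_succ_le_succ hlen) (by simp)
      -- concat part
      have h3 : FreeAlgebra.ι ℚ a * flagF ((d :: t) ++ b :: bs)
          = flagF ((a :: d :: t) ++ b :: bs) + flagF (((a + d) :: t) ++ b :: bs) := by
        simp only [List.cons_append]
        rw [flagF_cons a d (t ++ b :: bs)]
        ring_nf
        abel
      -- merged part
      have h4 : FreeAlgebra.ι ℚ a * flagF (compNcat (d :: t) (b :: bs))
          = flagF (compNcat (a :: d :: t) (b :: bs)) + flagF (compNcat ((a + d) :: t) (b :: bs)) := by
        cases t with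
        | nil =>
          rw [compNcat_single, compNcat_single, compNcat_cons a [d] (by simp) b bs,
            compNcat_single, flagF_cons a (d + b) bs, ← Nat.add_assoc]
          ring_nf
          abel
        | cons u us =>
          rw [compNcat_cons d (u :: us) (by simp) b bs,
            compNcat_cons a (d :: u :: us) (by simp) b bs,
            compNcat_cons d (u :: us) (by simp) b bs,
            compNcat_cons (a + d) (u :: us) (by simp) b bs,
            flagF_cons a d (compNcat (u :: us) (b :: bs))]
          ring_nf
          abel
      rw [flagF_cons a d t, sub_mul, mul_assoc, h1, h2, mul_add, h3, h4]
      abel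


/-- the ribbon multiplication rule `f_α f_β = f_{α·β} + f_{α⊙β}` holds in the
free algebra on `y₁, y₂, …` (before imposing any Euler relations). -/
theorem flagF_mul (α β : List ℕ) (hα : IsComposition α) (hβ : IsComposition β) :
    flagF α * flagF β = flagF (α ++ β) + flagF (compNcat α β) := by
  have hα' := hα.1
  obtain ⟨b, bs, rfl⟩ := List.exists_cons_of_ne_nil hβ.1
  exact key b bs α.length α le_rfl hα'
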